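/- Let ∇̌ be the characteristic connection on the integrable totally null 2-plane field N = span(m,k) as above (with κ ≡ σ ≡ 0). Using the Newman-Penrose equations (np2), (np4), (np5), (np6), (np7) and the commutator [δ,D], the curvature Ř(m,k)m = [∇̌_m, ∇̌_k]m − ∇̌_{[m,k]}m equals 4Ψ₁ m. -/

import Mathlib

/-!
STATEMENT 15: For the characteristic connection ∇̌ of an integrable (κ ≡ σ ≡ 0)
totally null 2-plane field N = span(m,k), the Newman-Penrose equations and the
commutator [δ,D] give Ř(m,k)m = [∇̌_m, ∇̌_k]m − ∇̌_{[m,k]}m = 4Ψ₁ m.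

Functions on the manifold form the algebra `M → ℂ`; the frame vector fields
δ = m, ∂, Δ, D = k act as derivations (named δ, Dp, Dn, D). A section of N is
represented by its pair of coefficient functions in the frame (m,k); covariant
derivatives along m and k are given by the defining formulas
∇̌_m m = (β−α'+2τ)m − λ'k, ∇̌_k m = (ε−ε'−ρ)m + (τ−π')k,
∇̌_m k = (ρ'−ρ)m + (α'+β+τ)k, ∇̌_k k = κ'm + (ε+ε'−2ρ)k.
-/

variable {M : Type*}

/-- Covariant derivative along m of a section v₁m + v₂k of N. -/
noncomputable def covAlongM (δ : Derivation ℂ (M → ℂ) (M → ℂ))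
    (α' β τ lam' ρ ρ' : M → ℂ) (v : (M → ℂ) × (M → ℂ)) : (M → ℂ) × (M → ℂ) :=
  (δ v.1 + v.1 * (β - α' + 2 * τ) + v.2 * (ρ' - ρ),
   δ v.2 + v.1 * (-lam') + v.2 * (α' + β + τ))

/-- Covariant derivative along k of a section v₁m + v₂k of N. -/
noncomputable def covAlongK (D : Derivation ℂ (M → ℂ) (M → ℂ))
    (ε ε' κ' π' ρ τ : M → ℂ) (v : (M → ℂ) × (M → ℂ)) : (M → ℂ) × (M → ℂ) :=
  (D v.1 + v.1 * (ε - ε' - ρ) + v.2 * κ',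
   D v.2 + v.1 * (τ - π') + v.2 * (ε + ε' - 2 * ρ))

/-!
Writing ∇̌_m m = a m + b k and ∇̌_k m = c m + d k, the curvature Ř(m,k)m has components
δc − Da and δd − Db plus terms quadratic in the spin coefficients, the commutator [δ,D]
supplying the bracket [m,k] = (ρ'+ε'−ε) m + (α'+β+π') k. Substituting the
Newman-Penrose equations for the derivatives Dβ, Dτ, Dα', Dλ' and δε, δε', δρ, δτ, δπ',
everything cancels except 4Ψ₁ in the m-component.
-/

section Curvature

variable (δ D : Derivation ℂ (M → ℂ) (M → ℂ))
  (α' β ε ε' κ' lam' π' ρ ρ' τ : M → ℂ)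

theorem covAlongM_one_zero :
    covAlongM δ α' β τ lam' ρ ρ' (1, 0) = (β - α' + 2 * τ, -lam') := by
  simp [covAlongM]

theorem covAlongK_one_zero :
    covAlongK D ε ε' κ' π' ρ τ (1, 0) = (ε - ε' - ρ, τ - π') := by
  simp [covAlongK]

theorem curvature_on_m_eq :
    covAlongM δ α' β τ lam' ρ ρ' (covAlongK D ε ε' κ' π' ρ τ (1, 0))
      - covAlongK D ε ε' κ' π' ρ τ (covAlongM δ α' β τ lam' ρ ρ' (1, 0))
      - ((ρ' + ε' - ε) • covAlongM δ α' β τ lam' ρ ρ' (1, 0)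
          + (α' + β + π') • covAlongK D ε ε' κ' π' ρ τ (1, 0))
      = (δ (ε - ε' - ρ) - D (β - α' + 2 * τ) + (τ - π') * (ρ' - ρ) + lam' * κ'
          - (ρ' + ε' - ε) * (β - α' + 2 * τ) - (α' + β + π') * (ε - ε' - ρ),
        δ (τ - π') + D lam' - (ε - ε' - ρ) * lam' + (τ - π') * (α' + β + τ)
          - (β - α' + 2 * τ) * (τ - π') + lam' * (ε + ε' - 2 * ρ)
          + (ρ' + ε' - ε) * lam' - (α' + β + π') * (τ - π')) := by
  rw [covAlongM_one_zero, covAlongK_one_zero, covAlongM, covAlongK]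
  refine Prod.ext ?_ ?_ <;> simp only [map_neg, Prod.fst_sub, Prod.snd_sub, Prod.fst_add,
    Prod.snd_add, Prod.smul_fst, Prod.smul_snd, smul_eq_mul] <;> ring

end Curvature

theorem characteristic_connection_curvature_on_m_general
    (δ D : Derivation ℂ (M → ℂ) (M → ℂ))
    (α' β ε ε' κ' lam' π' ρ ρ' τ Ψ₁ P₁₁ P₁₄ : M → ℂ)
    -- (np2) with κ = σ = 0
    (hnp2 : D β = δ ε - α' * ε - β * ε' - ε * π' - β * ρ' - Ψ₁)
    -- (np3) with κ = σ = 0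
    (hnp3 : δ ρ = α' * ρ + β * ρ - ρ' * τ + ρ * τ - Ψ₁ - P₁₄)
    -- (np4) with κ = σ = 0
    (hnp4 : D τ = π' * ρ - ε' * τ + ε * τ - ρ * τ - Ψ₁ + P₁₄)
    -- (np5) with κ = σ = 0
    (hnp5 : D lam' = δ π' - 3 * ε' * lam' + ε * lam' + α' * π' - β * π'
        - π' ^ 2 - lam' * ρ' - P₁₁)
    -- (np6) with κ = σ = 0
    (hnp6 : D α' = δ ε' + α' * ε - 2 * α' * ε' - β * ε' - κ' * lam'
        - ε' * π' - α' * ρ' + π' * ρ' + P₁₄)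
    -- (np7) with κ = σ = 0
    (hnp7 : δ τ = lam' * ρ - α' * τ + β * τ + τ ^ 2 + P₁₁) :
    -- Ř(m,k)m = ∇̌_m (∇̌_k m) − ∇̌_k (∇̌_m m) − ∇̌_{[m,k]} m = 4Ψ₁ m,
    -- where m has coefficients (1,0) and [m,k] = (ρ'+ε'−ε) m + (α'+β+π') k
    covAlongM δ α' β τ lam' ρ ρ' (covAlongK D ε ε' κ' π' ρ τ (1, 0))
      - covAlongK D ε ε' κ' π' ρ τ (covAlongM δ α' β τ lam' ρ ρ' (1, 0))
      - ((ρ' + ε' - ε) • covAlongM δ α' β τ lam' ρ ρ' (1, 0)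
          + (α' + β + π') • covAlongK D ε ε' κ' π' ρ τ (1, 0))
      = (4 * Ψ₁) • ((1 : M → ℂ), (0 : M → ℂ)) := by
  rw [curvature_on_m_eq]
  simp only [map_sub, map_add, two_mul]
  rw [hnp2, hnp3, hnp4, hnp5, hnp6, hnp7]
  refine Prod.ext ?_ ?_ <;> simp only [Prod.smul_fst, Prod.smul_snd, smul_eq_mul] <;> ring

theorem characteristic_connection_curvature_on_m
    (δ Dp Dn D : Derivation ℂ (M → ℂ) (M → ℂ))
    (α α' β β' γ γ' ε ε' κ κ' lam' μ μ' ν' π π' ρ ρ' σ τ τ' Ψ₁ P₁₁ P₁₄ : M → ℂ)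
    (hκ : κ = 0) (hσ : σ = 0)
    -- commutator [δ,D] with κ = σ = 0 substituted
    (hcomm : ∀ f : M → ℂ,
      δ (D f) - D (δ f) = (ρ' + ε' - ε) * δ f + (α' + β + π') * D f)
    -- (np2) with κ = σ = 0
    (hnp2 : D β = δ ε - α' * ε - β * ε' - ε * π' - β * ρ' - Ψ₁)
    -- (np3) with κ = σ = 0
    (hnp3 : δ ρ = α' * ρ + β * ρ - ρ' * τ + ρ * τ - Ψ₁ - P₁₄)
    -- (np4) with κ = σ = 0
    (hnp4 : D τ = π' * ρ - ε' * τ + ε * τ - ρ * τ - Ψ₁ + P₁₄)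
    -- (np5) with κ = σ = 0
    (hnp5 : D lam' = δ π' - 3 * ε' * lam' + ε * lam' + α' * π' - β * π'
        - π' ^ 2 - lam' * ρ' - P₁₁)
    -- (np6) with κ = σ = 0
    (hnp6 : D α' = δ ε' + α' * ε - 2 * α' * ε' - β * ε' - κ' * lam'
        - ε' * π' - α' * ρ' + π' * ρ' + P₁₄)
    -- (np7) with κ = σ = 0
    (hnp7 : δ τ = lam' * ρ - α' * τ + β * τ + τ ^ 2 + P₁₁) :
    -- Ř(m,k)m = ∇̌_m (∇̌_k m) − ∇̌_k (∇̌_m m) − ∇̌_{[m,k]} m = 4Ψ₁ m,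
    -- where m has coefficients (1,0) and [m,k] = (ρ'+ε'−ε) m + (α'+β+π') k
    covAlongM δ α' β τ lam' ρ ρ' (covAlongK D ε ε' κ' π' ρ τ (1, 0))
      - covAlongK D ε ε' κ' π' ρ τ (covAlongM δ α' β τ lam' ρ ρ' (1, 0))
      - ((ρ' + ε' - ε) • covAlongM δ α' β τ lam' ρ ρ' (1, 0)
          + (α' + β + π') • covAlongK D ε ε' κ' π' ρ τ (1, 0))
      = (4 * Ψ₁) • ((1 : M → ℂ), (0 : M → ℂ)) :=
  characteristic_connection_curvature_on_m_general δ D α' β ε ε' κ' lam' π' ρ ρ' τ Ψ₁ P₁₁ P₁₄ hnp2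
    hnp3 hnp4 hnp5 hnp6 hnp7
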